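/- arXiv:1311.5457 — 3 statements merged into one kernel-verified Lean document; each statement's English description precedes it below -/
import Mathlib

section
/- Let κ₁, κ₂ : ℝ → ℝ be continuous curvature functions, let C₁, C₂ ∈ ℝ² be fixed vectors, and for i = 1, 2 define the planar curve γᵢ(s) = ∫₀ˢ ( C₁ sin(∫₀^σ κᵢ(r) dr) − C₂ cos(∫₀^σ κᵢ(r) dr) ) dσ (so γ₁(0) = γ₂(0) = 0 and both curves are built from the same Frenet constants C₁, C₂). If ε > 0 and sup_s |κ₁(s) − κ₂(s)| < ε, then for every s ≥ 0 one has ‖γ₁(s) − γ₂(s)‖₂ ≤ s² ε (‖C₁‖₂ + ‖C₂‖₂). -/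
open MeasureTheory Real

lemma aux_sin_sub (a b : ℝ) : |Real.sin a - Real.sin b| ≤ |a - b| := by
  rw [Real.sin_sub_sin]
  calc |2 * Real.sin ((a - b) / 2) * Real.cos ((a + b) / 2)|
      = 2 * |Real.sin ((a - b) / 2)| * |Real.cos ((a + b) / 2)| := by
        rw [abs_mul, abs_mul]; norm_num
    _ ≤ 2 * |(a - b) / 2| * 1 :=
        mul_le_mul (mul_le_mul_of_nonneg_left Real.abs_sin_le_abs (by norm_num))
          (Real.abs_cos_le_one _) (abs_nonneg _) (by positivity)
    _ = |a - b| := by rw [abs_div, abs_two]; ring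

lemma aux_cos_sub (a b : ℝ) : |Real.cos a - Real.cos b| ≤ |a - b| := by
  rw [Real.cos_sub_cos]
  calc |-2 * Real.sin ((a + b) / 2) * Real.sin ((a - b) / 2)|
      = 2 * |Real.sin ((a + b) / 2)| * |Real.sin ((a - b) / 2)| := by
        rw [abs_mul, abs_mul]; norm_num
    _ ≤ 2 * 1 * |(a - b) / 2| :=
        mul_le_mul (mul_le_mul_of_nonneg_left (Real.abs_sin_le_one _) (by norm_num))
          Real.abs_sin_le_abs (abs_nonneg _) (by norm_num)
    _ = |a - b| := by rw [abs_div, abs_two]; ring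

/-- Theorem (prop1): if the curvature functions of two planar Frenet curves built from the
same constant vectors `C₁, C₂` are uniformly `ε`-close, then the curves are pointwise
`s²ε(‖C₁‖+‖C₂‖)`-close. -/
theorem stmt0
    (κ₁ κ₂ : ℝ → ℝ) (hκ₁ : Continuous κ₁) (hκ₂ : Continuous κ₂)
    (C₁ C₂ : EuclideanSpace ℝ (Fin 2)) (ε : ℝ) (hε : 0 < ε)
    (hsup : ∀ s, |κ₁ s - κ₂ s| < ε)
    (γ₁ γ₂ : ℝ → EuclideanSpace ℝ (Fin 2))
    (hγ₁ : ∀ s, γ₁ s = ∫ σ in (0:ℝ)..s,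
      (Real.sin (∫ r in (0:ℝ)..σ, κ₁ r) • C₁ - Real.cos (∫ r in (0:ℝ)..σ, κ₁ r) • C₂))
    (hγ₂ : ∀ s, γ₂ s = ∫ σ in (0:ℝ)..s,
      (Real.sin (∫ r in (0:ℝ)..σ, κ₂ r) • C₁ - Real.cos (∫ r in (0:ℝ)..σ, κ₂ r) • C₂)) :
    ∀ s ≥ (0:ℝ), ‖γ₁ s - γ₂ s‖ ≤ s ^ 2 * ε * (‖C₁‖ + ‖C₂‖) := by
  intro s hs
  set θ₁ : ℝ → ℝ := fun σ => ∫ r in (0:ℝ)..σ, κ₁ r with hθ₁def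
  set θ₂ : ℝ → ℝ := fun σ => ∫ r in (0:ℝ)..σ, κ₂ r with hθ₂def
  have hθ₁c : Continuous θ₁ :=
    intervalIntegral.continuous_primitive (fun a b => hκ₁.intervalIntegrable a b) 0
  have hθ₂c : Continuous θ₂ :=
    intervalIntegral.continuous_primitive (fun a b => hκ₂.intervalIntegrable a b) 0
  -- the two integrands
  set f₁ : ℝ → EuclideanSpace ℝ (Fin 2) :=
    fun σ => Real.sin (θ₁ σ) • C₁ - Real.cos (θ₁ σ) • C₂ with hf₁def
  set f₂ : ℝ → EuclideanSpace ℝ (Fin 2) :=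
    fun σ => Real.sin (θ₂ σ) • C₁ - Real.cos (θ₂ σ) • C₂ with hf₂def
  have hf₁c : Continuous f₁ :=
    ((Real.continuous_sin.comp hθ₁c).smul continuous_const).sub
      ((Real.continuous_cos.comp hθ₁c).smul continuous_const)
  have hf₂c : Continuous f₂ :=
    ((Real.continuous_sin.comp hθ₂c).smul continuous_const).sub
      ((Real.continuous_cos.comp hθ₂c).smul continuous_const)
  have hint₁ : IntervalIntegrable f₁ volume 0 s := hf₁c.intervalIntegrable 0 s
  have hint₂ : IntervalIntegrable f₂ volume 0 s := hf₂c.intervalIntegrable 0 s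
  have key : γ₁ s - γ₂ s = ∫ σ in (0:ℝ)..s, (f₁ σ - f₂ σ) := by
    rw [hγ₁, hγ₂, intervalIntegral.integral_sub hint₁ hint₂]
  -- pointwise bound on θ₁ - θ₂
  have hθbound : ∀ σ ∈ Set.Icc (0:ℝ) s, |θ₁ σ - θ₂ σ| ≤ ε * σ := by
    intro σ hσ
    have : θ₁ σ - θ₂ σ = ∫ r in (0:ℝ)..σ, (κ₁ r - κ₂ r) := by
      simp only [hθ₁def, hθ₂def]
      rw [intervalIntegral.integral_sub (hκ₁.intervalIntegrable 0 σ)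
        (hκ₂.intervalIntegrable 0 σ)]
    rw [this]
    have hb : ‖∫ r in (0:ℝ)..σ, (κ₁ r - κ₂ r)‖ ≤ ε * |σ - 0| :=
      intervalIntegral.norm_integral_le_of_norm_le_const
        (fun r _ => le_of_lt (by simpa [Real.norm_eq_abs] using hsup r))
    rw [sub_zero, abs_of_nonneg hσ.1] at hb
    simpa [Real.norm_eq_abs] using hb
  -- pointwise bound on the integrand difference
  have hfbound : ∀ σ ∈ Set.Icc (0:ℝ) s, ‖f₁ σ - f₂ σ‖ ≤ ε * σ * (‖C₁‖ + ‖C₂‖) := by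
    intro σ hσ
    have hsin : |Real.sin (θ₁ σ) - Real.sin (θ₂ σ)| ≤ ε * σ := by
      calc |Real.sin (θ₁ σ) - Real.sin (θ₂ σ)| ≤ |θ₁ σ - θ₂ σ| := aux_sin_sub _ _
        _ ≤ ε * σ := hθbound σ hσ
    have hcos : |Real.cos (θ₁ σ) - Real.cos (θ₂ σ)| ≤ ε * σ := by
      calc |Real.cos (θ₁ σ) - Real.cos (θ₂ σ)| ≤ |θ₁ σ - θ₂ σ| := aux_cos_sub _ _
        _ ≤ ε * σ := hθbound σ hσ
    have : f₁ σ - f₂ σ =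
        (Real.sin (θ₁ σ) - Real.sin (θ₂ σ)) • C₁ - (Real.cos (θ₁ σ) - Real.cos (θ₂ σ)) • C₂ := by
      simp only [hf₁def, hf₂def, sub_smul]
      abel
    rw [this]
    calc ‖(Real.sin (θ₁ σ) - Real.sin (θ₂ σ)) • C₁ -
            (Real.cos (θ₁ σ) - Real.cos (θ₂ σ)) • C₂‖
        ≤ ‖(Real.sin (θ₁ σ) - Real.sin (θ₂ σ)) • C₁‖ +
            ‖(Real.cos (θ₁ σ) - Real.cos (θ₂ σ)) • C₂‖ := norm_sub_le _ _
      _ = |Real.sin (θ₁ σ) - Real.sin (θ₂ σ)| * ‖C₁‖ +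
            |Real.cos (θ₁ σ) - Real.cos (θ₂ σ)| * ‖C₂‖ := by
            rw [norm_smul, norm_smul, Real.norm_eq_abs, Real.norm_eq_abs]
      _ ≤ (ε * σ) * ‖C₁‖ + (ε * σ) * ‖C₂‖ := by
            have h1 : (0:ℝ) ≤ ‖C₁‖ := norm_nonneg _
            have h2 : (0:ℝ) ≤ ‖C₂‖ := norm_nonneg _
            have := abs_nonneg (Real.sin (θ₁ σ) - Real.sin (θ₂ σ))
            nlinarith [mul_le_mul_of_nonneg_right hsin h1,
              mul_le_mul_of_nonneg_right hcos h2]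
      _ = ε * σ * (‖C₁‖ + ‖C₂‖) := by ring
  have hdiffint : IntervalIntegrable (fun σ => f₁ σ - f₂ σ) volume 0 s :=
    (hf₁c.sub hf₂c).intervalIntegrable 0 s
  have hnormint : ‖γ₁ s - γ₂ s‖ ≤ ∫ σ in (0:ℝ)..s, ‖f₁ σ - f₂ σ‖ := by
    rw [key]
    exact intervalIntegral.norm_integral_le_integral_norm hs
  have hmono : (∫ σ in (0:ℝ)..s, ‖f₁ σ - f₂ σ‖) ≤
      ∫ σ in (0:ℝ)..s, ε * σ * (‖C₁‖ + ‖C₂‖) := by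
    apply intervalIntegral.integral_mono_on hs
      ((hf₁c.sub hf₂c).norm.intervalIntegrable 0 s)
      (((continuous_const.mul continuous_id).mul continuous_const).intervalIntegrable 0 s)
    exact hfbound
  have hval : (∫ σ in (0:ℝ)..s, ε * σ * (‖C₁‖ + ‖C₂‖)) = ε * (s ^ 2 / 2) * (‖C₁‖ + ‖C₂‖) := by
    have : (∫ σ in (0:ℝ)..s, σ) = s ^ 2 / 2 := by
      simp [integral_id]
    rw [show (fun σ => ε * σ * (‖C₁‖ + ‖C₂‖)) = fun σ => (ε * (‖C₁‖ + ‖C₂‖)) * σ by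
      funext σ; ring]
    rw [intervalIntegral.integral_const_mul, this]
    ring
  have hfinal : ε * (s ^ 2 / 2) * (‖C₁‖ + ‖C₂‖) ≤ s ^ 2 * ε * (‖C₁‖ + ‖C₂‖) := by
    have h1 : (0:ℝ) ≤ ‖C₁‖ + ‖C₂‖ := by positivity
    nlinarith [mul_nonneg (mul_nonneg hε.le (sq_nonneg s)) h1]
  linarith [hnormint, hmono, hval ▸ hmono]
end

section
/- Let κ₁, κ₂ : ℝ → ℝ be continuous, C₁, C₂ ∈ ℝ², and for i = 1, 2 define γᵢ(s) = ∫₀ˢ ( C₁ sin(∫₀^σ κᵢ(r) dr) − C₂ cos(∫₀^σ κᵢ(r) dr) ) dσ. If ε > 0, sup_s |κ₁(s) − κ₂(s)| < ε, and s ≥ 0 satisfies s ε ≤ π, then ‖γ₁(s) − γ₂(s)‖₂ ≤ 2 s (‖C₁‖₂ + ‖C₂‖₂) · |sin(s ε / 2)|. -/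
open MeasureTheory Real

lemma abs_sin_le_sin (t u : ℝ) (ht : |t| ≤ u) (hu : u ≤ π / 2) :
    |Real.sin t| ≤ Real.sin u := by
  have hpi := Real.pi_pos
  have hnn : 0 ≤ Real.sin |t| :=
    Real.sin_nonneg_of_nonneg_of_le_pi (abs_nonneg t) (by linarith)
  have h1 : |Real.sin t| = Real.sin |t| := by
    rcases abs_cases t with ⟨h, _⟩ | ⟨h, _⟩
    · rw [h] at hnn ⊢; exact abs_of_nonneg hnn
    · rw [h, Real.sin_neg] at hnn ⊢
      exact abs_of_nonpos (by linarith)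
  rw [h1]
  exact Real.strictMonoOn_sin.monotoneOn ⟨by linarith [abs_nonneg t], ht.trans hu⟩
    ⟨by linarith [abs_nonneg t], hu⟩ ht

/-- Sharper intermediate bound: `‖γ₁(s) − γ₂(s)‖ ≤ 2s(‖C₁‖+‖C₂‖)|sin(sε/2)|`
when the curvatures are uniformly `ε`-close and `sε ≤ π`. -/
theorem stmt1
    (κ₁ κ₂ : ℝ → ℝ) (hκ₁ : Continuous κ₁) (hκ₂ : Continuous κ₂)
    (C₁ C₂ : EuclideanSpace ℝ (Fin 2)) (ε : ℝ) (hε : 0 < ε)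
    (hsup : ∀ s, |κ₁ s - κ₂ s| < ε)
    (γ₁ γ₂ : ℝ → EuclideanSpace ℝ (Fin 2))
    (hγ₁ : ∀ s, γ₁ s = ∫ σ in (0:ℝ)..s,
      (Real.sin (∫ r in (0:ℝ)..σ, κ₁ r) • C₁ - Real.cos (∫ r in (0:ℝ)..σ, κ₁ r) • C₂))
    (hγ₂ : ∀ s, γ₂ s = ∫ σ in (0:ℝ)..s,
      (Real.sin (∫ r in (0:ℝ)..σ, κ₂ r) • C₁ - Real.cos (∫ r in (0:ℝ)..σ, κ₂ r) • C₂))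
    (s : ℝ) (hs : 0 ≤ s) (hsε : s * ε ≤ π) :
    ‖γ₁ s - γ₂ s‖ ≤ 2 * s * (‖C₁‖ + ‖C₂‖) * |Real.sin (s * ε / 2)| := by
  set θ₁ : ℝ → ℝ := fun σ => ∫ r in (0:ℝ)..σ, κ₁ r with hθ₁def
  set θ₂ : ℝ → ℝ := fun σ => ∫ r in (0:ℝ)..σ, κ₂ r with hθ₂def
  have hθ₁c : Continuous θ₁ :=
    intervalIntegral.continuous_primitive (fun a b => hκ₁.intervalIntegrable a b) 0
  have hθ₂c : Continuous θ₂ :=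
    intervalIntegral.continuous_primitive (fun a b => hκ₂.intervalIntegrable a b) 0
  -- the two integrands
  set f₁ : ℝ → EuclideanSpace ℝ (Fin 2) := fun σ => Real.sin (θ₁ σ) • C₁ - Real.cos (θ₁ σ) • C₂
  set f₂ : ℝ → EuclideanSpace ℝ (Fin 2) := fun σ => Real.sin (θ₂ σ) • C₁ - Real.cos (θ₂ σ) • C₂
  have hf₁ : Continuous f₁ :=
    ((Real.continuous_sin.comp hθ₁c).smul continuous_const).sub
      ((Real.continuous_cos.comp hθ₁c).smul continuous_const)
  have hf₂ : Continuous f₂ :=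
    ((Real.continuous_sin.comp hθ₂c).smul continuous_const).sub
      ((Real.continuous_cos.comp hθ₂c).smul continuous_const)
  have hsub : γ₁ s - γ₂ s = ∫ σ in (0:ℝ)..s, (f₁ σ - f₂ σ) := by
    rw [hγ₁, hγ₂, intervalIntegral.integral_sub (hf₁.intervalIntegrable 0 s)
      (hf₂.intervalIntegrable 0 s)]
  -- bound the angle difference
  have hangle : ∀ σ ∈ Set.Icc (0:ℝ) s, |θ₁ σ - θ₂ σ| ≤ σ * ε := by
    intro σ hσ
    have h1 : θ₁ σ - θ₂ σ = ∫ r in (0:ℝ)..σ, (κ₁ r - κ₂ r) := by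
      rw [hθ₁def, hθ₂def,
        intervalIntegral.integral_sub (hκ₁.intervalIntegrable 0 σ) (hκ₂.intervalIntegrable 0 σ)]
    rw [h1]
    calc ‖∫ r in (0:ℝ)..σ, (κ₁ r - κ₂ r)‖ ≤ ε * |σ - 0| :=
          intervalIntegral.norm_integral_le_of_norm_le_const
            (fun x _ => le_of_lt (hsup x))
      _ = σ * ε := by rw [abs_of_nonneg (by linarith [hσ.1] : (0:ℝ) ≤ σ - 0)]; ring
  -- pointwise bound on the integrand
  have hbound : ∀ σ ∈ Set.Icc (0:ℝ) s,
      ‖f₁ σ - f₂ σ‖ ≤ 2 * (‖C₁‖ + ‖C₂‖) * Real.sin (s * ε / 2) := by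
    intro σ hσ
    have hd : |(θ₁ σ - θ₂ σ) / 2| ≤ s * ε / 2 := by
      rw [abs_div, abs_two]
      have := hangle σ hσ
      have : |θ₁ σ - θ₂ σ| ≤ s * ε :=
        this.trans (by nlinarith [hσ.1, hσ.2, hε.le])
      linarith
    have hsin : |Real.sin ((θ₁ σ - θ₂ σ) / 2)| ≤ Real.sin (s * ε / 2) :=
      abs_sin_le_sin _ _ hd (by linarith)
    have hsinpos : 0 ≤ Real.sin (s * ε / 2) :=
      Real.sin_nonneg_of_nonneg_of_le_pi
        (by positivity) (by linarith [Real.pi_pos])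
    have e1 : |Real.sin (θ₁ σ) - Real.sin (θ₂ σ)| ≤ 2 * Real.sin (s * ε / 2) := by
      rw [Real.sin_sub_sin, abs_mul, abs_mul, abs_two]
      nlinarith [abs_cos_le_one ((θ₁ σ + θ₂ σ) / 2), abs_nonneg (Real.sin ((θ₁ σ - θ₂ σ)/2))]
    have e2 : |Real.cos (θ₁ σ) - Real.cos (θ₂ σ)| ≤ 2 * Real.sin (s * ε / 2) := by
      rw [Real.cos_sub_cos, abs_mul, abs_mul, abs_neg, abs_two]
      nlinarith [abs_sin_le_one ((θ₁ σ + θ₂ σ) / 2), abs_nonneg (Real.sin ((θ₁ σ - θ₂ σ)/2))]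
    have : f₁ σ - f₂ σ =
        (Real.sin (θ₁ σ) - Real.sin (θ₂ σ)) • C₁ - (Real.cos (θ₁ σ) - Real.cos (θ₂ σ)) • C₂ := by
      simp only [f₁, f₂, sub_smul]
      abel
    rw [this]
    calc ‖(Real.sin (θ₁ σ) - Real.sin (θ₂ σ)) • C₁ - (Real.cos (θ₁ σ) - Real.cos (θ₂ σ)) • C₂‖
        ≤ ‖(Real.sin (θ₁ σ) - Real.sin (θ₂ σ)) • C₁‖ + ‖(Real.cos (θ₁ σ) - Real.cos (θ₂ σ)) • C₂‖ :=
          norm_sub_le _ _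
      _ = |Real.sin (θ₁ σ) - Real.sin (θ₂ σ)| * ‖C₁‖ +
          |Real.cos (θ₁ σ) - Real.cos (θ₂ σ)| * ‖C₂‖ := by rw [norm_smul, norm_smul]; rfl
      _ ≤ 2 * Real.sin (s * ε / 2) * ‖C₁‖ + 2 * Real.sin (s * ε / 2) * ‖C₂‖ := by
          exact add_le_add (mul_le_mul_of_nonneg_right e1 (norm_nonneg _))
            (mul_le_mul_of_nonneg_right e2 (norm_nonneg _))
      _ = 2 * (‖C₁‖ + ‖C₂‖) * Real.sin (s * ε / 2) := by ring
  have hsinpos : 0 ≤ Real.sin (s * ε / 2) :=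
    Real.sin_nonneg_of_nonneg_of_le_pi (by positivity) (by linarith [Real.pi_pos])
  rw [hsub]
  calc ‖∫ σ in (0:ℝ)..s, (f₁ σ - f₂ σ)‖
      ≤ 2 * (‖C₁‖ + ‖C₂‖) * Real.sin (s * ε / 2) * |s - 0| :=
        intervalIntegral.norm_integral_le_of_norm_le_const (fun x hx => by
          apply hbound
          rw [Set.uIoc_of_le hs] at hx
          exact ⟨hx.1.le, hx.2⟩)
    _ = 2 * s * (‖C₁‖ + ‖C₂‖) * |Real.sin (s * ε / 2)| := by
        rw [abs_of_nonneg (by linarith : (0:ℝ) ≤ s - 0), abs_of_nonneg hsinpos]; ring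
end

section
/- Let A₁, A₂ ⊆ ℝ² be measurable sets with Lebesgue measures m(A₁), m(A₂), with m(A₂) > 0, and suppose the intersection A = A₁ ∩ A₂ and the set A₂ have areas given by Green's-theorem line integrals: m(A) = (1/2)∫₀^{2π}(x y' − y x') ds and m(A₂) = (1/2)∫₀^{2π}(x₂ y₂' − y₂ x₂') ds for continuously differentiable boundary parameterizations γ(s)=(x(s),y(s)) and γ₂(s)=(x₂(s),y₂(s)) on [0,2π]. Let ε, M ≥ 0 satisfy: for all s ∈ [0,2π], max{|x−x₂|, |y−y₂|, |x'−x₂'|, |y'−y₂'|} ≤ ε and 2·max{|x|,|x₂|,|y|,|y₂|,|x'|,|x₂'|,|y'|,|y₂'|} ≤ M. Define the shape coherence factor α(A₁, A₂) := sup over rigid motions R of ℝ² (compositions of rotations and translations, i.e. orientation-preserving isometries of the Euclidean plane) of m(R(A₂) ∩ A₁)/m(A₂). Then 1 ≥ α(A₁, A₂) ≥ 1 − 2π M ε / m(A₂). -/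
open MeasureTheory Real Complex

lemma vol_image_rigid (A : Set ℂ) (θ : ℝ) (w : ℂ) (hA : MeasurableSet A) :
    volume ((fun z => Complex.exp (θ * Complex.I) * z + w) '' A) = volume A := by
  set c : Circle := Circle.exp θ with hc
  have hcoe : (c : ℂ) = Complex.exp (θ * Complex.I) := Circle.coe_exp θ
  set f : ℂ → ℂ := fun z => Complex.exp (θ * Complex.I) * z + w with hf
  set g : ℂ → ℂ := fun z => (rotation c).symm (z - w) with hg
  have himg : f '' A = g ⁻¹' A := by
    have := Set.image_eq_preimage_of_inverse (f := f) (g := g) ?_ ?_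
    · exact congrFun this A
    · intro z
      simp only [hf, hg, add_sub_cancel_right, ← hcoe, ← rotation_apply,
        LinearIsometryEquiv.symm_apply_apply]
    · intro z
      simp only [hf, hg, ← hcoe, ← rotation_apply, LinearIsometryEquiv.apply_symm_apply,
        sub_add_cancel]
  have hmp : MeasurePreserving g volume volume :=
    ((rotation c).symm.measurePreserving).comp (measurePreserving_sub_right volume w)
  rw [himg, hmp.measure_preimage hA.nullMeasurableSet]

/-- Theorem 3.6: shape coherence bound.  Identifying the plane with `ℂ`, rigid motions are the
maps `z ↦ exp(θ i) z + w`.  If the areas of `A = A₁ ∩ A₂` and of `A₂` are given by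
Green's-theorem line integrals of C¹ boundary parameterizations that are `ε`-close with size
bound `M`, then the shape coherence factor `α(A₁, A₂)` satisfies `1 ≥ α ≥ 1 − 2πMε/m(A₂)`. -/
theorem stmt3
    (A₁ A₂ : Set ℂ) (hA₁ : MeasurableSet A₁) (hA₂ : MeasurableSet A₂)
    (x y x₂ y₂ x' y' x₂' y₂' : ℝ → ℝ)
    (hx : ∀ s, HasDerivAt x (x' s) s) (hy : ∀ s, HasDerivAt y (y' s) s)
    (hx₂ : ∀ s, HasDerivAt x₂ (x₂' s) s) (hy₂ : ∀ s, HasDerivAt y₂ (y₂' s) s)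
    (hx'c : Continuous x') (hy'c : Continuous y')
    (hx₂'c : Continuous x₂') (hy₂'c : Continuous y₂')
    (ε M : ℝ) (hε : 0 ≤ ε) (hM : 0 ≤ M)
    (hclose : ∀ s ∈ Set.Icc (0:ℝ) (2*π),
      max (max |x s - x₂ s| |y s - y₂ s|) (max |x' s - x₂' s| |y' s - y₂' s|) ≤ ε)
    (hbound : ∀ s ∈ Set.Icc (0:ℝ) (2*π),
      2 * max (max (max |x s| |x₂ s|) (max |y s| |y₂ s|))
              (max (max |x' s| |x₂' s|) (max |y' s| |y₂' s|)) ≤ M)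
    (hmA : (volume (A₁ ∩ A₂)).toReal
      = (1/2) * ∫ s in (0:ℝ)..(2*π), (x s * y' s - y s * x' s))
    (hmA₂ : (volume A₂).toReal
      = (1/2) * ∫ s in (0:ℝ)..(2*π), (x₂ s * y₂' s - y₂ s * x₂' s))
    (hpos : 0 < (volume A₂).toReal)
    (α : ℝ)
    (hα : α = sSup {r : ℝ | ∃ (θ : ℝ) (w : ℂ),
      r = (volume (((fun z => Complex.exp (θ * Complex.I) * z + w) '' A₂) ∩ A₁)).toReal
            / (volume A₂).toReal}) :
    1 ≥ α ∧ α ≥ 1 - 2 * π * M * ε / (volume A₂).toReal := by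
  have hfin : volume A₂ ≠ ⊤ := by
    intro h; rw [h] at hpos; simp at hpos
  set S : Set ℝ := {r : ℝ | ∃ (θ : ℝ) (w : ℂ),
      r = (volume (((fun z => Complex.exp (θ * Complex.I) * z + w) '' A₂) ∩ A₁)).toReal
            / (volume A₂).toReal} with hS
  have hmem : (volume (A₂ ∩ A₁)).toReal / (volume A₂).toReal ∈ S := by
    refine ⟨0, 0, ?_⟩
    simp [Complex.ofReal_zero]
  have hub : ∀ r ∈ S, r ≤ 1 := by
    rintro r ⟨θ, w, rfl⟩
    have h1 : volume (((fun z => Complex.exp (θ * Complex.I) * z + w) '' A₂) ∩ A₁) ≤ volume A₂ := by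
      rw [← vol_image_rigid A₂ θ w hA₂]
      exact measure_mono Set.inter_subset_left
    have h2 : (volume (((fun z => Complex.exp (θ * Complex.I) * z + w) '' A₂) ∩ A₁)).toReal
        ≤ (volume A₂).toReal :=
      ENNReal.toReal_mono hfin h1
    rw [div_le_one hpos]
    exact h2
  have hbdd : BddAbove S := ⟨1, hub⟩
  have hne : S.Nonempty := ⟨_, hmem⟩
  constructor
  · rw [hα]; exact csSup_le hne hub
  · -- key integral estimate
    have hxc : Continuous x := continuous_iff_continuousAt.mpr fun s => (hx s).continuousAt
    have hyc : Continuous y := continuous_iff_continuousAt.mpr fun s => (hy s).continuousAt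
    have hx₂c : Continuous x₂ := continuous_iff_continuousAt.mpr fun s => (hx₂ s).continuousAt
    have hy₂c : Continuous y₂ := continuous_iff_continuousAt.mpr fun s => (hy₂ s).continuousAt
    have hint : IntervalIntegrable (fun s => x s * y' s - y s * x' s) volume 0 (2*π) :=
      (((hxc.mul hy'c).sub (hyc.mul hx'c))).intervalIntegrable _ _
    have hint₂ : IntervalIntegrable (fun s => x₂ s * y₂' s - y₂ s * x₂' s) volume 0 (2*π) :=
      (((hx₂c.mul hy₂'c).sub (hy₂c.mul hx₂'c))).intervalIntegrable _ _
    have hdiff : (volume A₂).toReal - (volume (A₁ ∩ A₂)).toReal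
        = (1/2) * ∫ s in (0:ℝ)..(2*π),
            ((x₂ s * y₂' s - y₂ s * x₂' s) - (x s * y' s - y s * x' s)) := by
      rw [hmA₂, hmA, intervalIntegral.integral_sub hint₂ hint]; ring
    have hptwise : ∀ s ∈ Set.uIoc (0:ℝ) (2*π),
        ‖(x₂ s * y₂' s - y₂ s * x₂' s) - (x s * y' s - y s * x' s)‖ ≤ 2 * (M * ε) := by
      intro s hs
      have hsIcc : s ∈ Set.Icc (0:ℝ) (2*π) := by
        rw [Set.uIoc_of_le (by positivity : (0:ℝ) ≤ 2*π)] at hs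
        exact ⟨le_of_lt hs.1, hs.2⟩
      have h1 := hclose s hsIcc
      have h2 := hbound s hsIcc
      have hxb : |x s| ≤ M/2 := by
        have : |x s| ≤ max (max (max |x s| |x₂ s|) (max |y s| |y₂ s|))
              (max (max |x' s| |x₂' s|) (max |y' s| |y₂' s|)) := by
          apply le_max_of_le_left; apply le_max_of_le_left; exact le_max_left _ _
        linarith
      have hy₂b : |y₂ s| ≤ M/2 := by
        have : |y₂ s| ≤ max (max (max |x s| |x₂ s|) (max |y s| |y₂ s|))
              (max (max |x' s| |x₂' s|) (max |y' s| |y₂' s|)) := by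
          apply le_max_of_le_left; apply le_max_of_le_right; exact le_max_right _ _
        linarith
      have hx'b : |x' s| ≤ M/2 := by
        have : |x' s| ≤ max (max (max |x s| |x₂ s|) (max |y s| |y₂ s|))
              (max (max |x' s| |x₂' s|) (max |y' s| |y₂' s|)) := by
          apply le_max_of_le_right; apply le_max_of_le_left; exact le_max_left _ _
        linarith
      have hy₂'b : |y₂' s| ≤ M/2 := by
        have : |y₂' s| ≤ max (max (max |x s| |x₂ s|) (max |y s| |y₂ s|))
              (max (max |x' s| |x₂' s|) (max |y' s| |y₂' s|)) := by
          apply le_max_of_le_right; apply le_max_of_le_right; exact le_max_right _ _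
        linarith
      have hxe : |x s - x₂ s| ≤ ε :=
        le_trans (le_max_of_le_left (le_max_left _ _)) h1
      have hye : |y s - y₂ s| ≤ ε :=
        le_trans (le_max_of_le_left (le_max_right _ _)) h1
      have hx'e : |x' s - x₂' s| ≤ ε :=
        le_trans (le_max_of_le_right (le_max_left _ _)) h1
      have hy'e : |y' s - y₂' s| ≤ ε :=
        le_trans (le_max_of_le_right (le_max_right _ _)) h1
      have e1 : |x₂ s * y₂' s - x s * y' s| ≤ M * ε := by
        have : x₂ s * y₂' s - x s * y' s = -((x s - x₂ s) * y₂' s) + x s * -(y' s - y₂' s) := by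
          ring
        rw [this]
        calc |-((x s - x₂ s) * y₂' s) + x s * -(y' s - y₂' s)|
            ≤ |-((x s - x₂ s) * y₂' s)| + |x s * -(y' s - y₂' s)| := abs_add_le _ _
          _ = |x s - x₂ s| * |y₂' s| + |x s| * |y' s - y₂' s| := by
              rw [abs_neg, abs_mul, abs_mul, abs_neg]
          _ ≤ ε * (M/2) + (M/2) * ε := by
              gcongr <;> first | exact abs_nonneg _ | assumption
          _ = M * ε := by ring
      have e2 : |y s * x' s - y₂ s * x₂' s| ≤ M * ε := by
        have : y s * x' s - y₂ s * x₂' s = (y s - y₂ s) * x' s + y₂ s * (x' s - x₂' s) := by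
          ring
        rw [this]
        calc |(y s - y₂ s) * x' s + y₂ s * (x' s - x₂' s)|
            ≤ |(y s - y₂ s) * x' s| + |y₂ s * (x' s - x₂' s)| := abs_add_le _ _
          _ = |y s - y₂ s| * |x' s| + |y₂ s| * |x' s - x₂' s| := by rw [abs_mul, abs_mul]
          _ ≤ ε * (M/2) + (M/2) * ε := by
              gcongr <;> first | exact abs_nonneg _ | assumption
          _ = M * ε := by ring
      have : (x₂ s * y₂' s - y₂ s * x₂' s) - (x s * y' s - y s * x' s)
          = (x₂ s * y₂' s - x s * y' s) + (y s * x' s - y₂ s * x₂' s) := by ring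
      rw [Real.norm_eq_abs, this]
      calc |(x₂ s * y₂' s - x s * y' s) + (y s * x' s - y₂ s * x₂' s)|
          ≤ |x₂ s * y₂' s - x s * y' s| + |y s * x' s - y₂ s * x₂' s| := abs_add_le _ _
        _ ≤ M * ε + M * ε := add_le_add e1 e2
        _ = 2 * (M * ε) := by ring
    have hintbound : ‖∫ s in (0:ℝ)..(2*π),
        ((x₂ s * y₂' s - y₂ s * x₂' s) - (x s * y' s - y s * x' s))‖ ≤ 2 * (M * ε) * |2*π - 0| :=
      intervalIntegral.norm_integral_le_of_norm_le_const hptwise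
    have hkey : (volume A₂).toReal - (volume (A₁ ∩ A₂)).toReal ≤ 2 * π * M * ε := by
      rw [hdiff]
      have h2π : |2*π - 0| = 2*π := by
        rw [sub_zero, _root_.abs_of_nonneg (by positivity : (0:ℝ) ≤ 2*π)]
      have h3 := le_trans (le_abs_self _) hintbound
      rw [h2π] at h3
      linarith
    -- conclude
    have hr₀ : (volume (A₂ ∩ A₁)).toReal / (volume A₂).toReal ≤ α := by
      rw [hα]; exact le_csSup hbdd hmem
    rw [Set.inter_comm] at hr₀
    have hfrac : 1 - 2 * π * M * ε / (volume A₂).toReal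
        ≤ (volume (A₁ ∩ A₂)).toReal / (volume A₂).toReal := by
      have h1 : ((volume A₂).toReal - 2 * π * M * ε) / (volume A₂).toReal
          ≤ (volume (A₁ ∩ A₂)).toReal / (volume A₂).toReal :=
        (div_le_div_iff_of_pos_right hpos).mpr (by linarith)
      calc 1 - 2 * π * M * ε / (volume A₂).toReal
          = ((volume A₂).toReal - 2 * π * M * ε) / (volume A₂).toReal := by
            field_simp
        _ ≤ _ := h1
    exact le_trans hfrac hr₀
end
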